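/- Let G be a countable discrete group acting continuously on a compact metric space (X,d), let {F_n} be a sequence of finite subsets of G, and let K ⊆ X be a non-empty compact set. Let s ≥ 0, N ∈ ℕ and ε > 0, and suppose c := W(K,N,ε,s,{F_n}) > 0. Then there is a Borel probability measure μ on X with μ(K) = 1 such that μ(B_{F_n}(x,ε)) ≤ (1/c) exp(−s|F_n|) for every x ∈ X and every n ≥ N. -/

import Mathlib

open Filter Set MeasureTheory Topology ENNReal Pointwise

variable {G X : Type*}

section Defs

variable [Group G] [MetricSpace X] [MulAction G X]

/-- The Bowen ball `B_F(x,ε) = {y : d(gx,gy) < ε for all g ∈ F}`. -/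
def bowenBall (F : Finset G) (x : X) (ε : ℝ) : Set X :=
  {y : X | ∀ g ∈ F, dist (g • x) (g • y) < ε}

/-- A Følner sequence: `|F_n ∆ gF_n|/|F_n| → 0` for every `g ∈ G`. -/
def IsFolnerSeq (F : ℕ → Finset G) : Prop :=
  ∀ g : G, Tendsto
    (fun n => ((symmDiff (F n : Set G) ((g * ·) '' (F n : Set G))).ncard : ℝ) / (F n).card)
    atTop (𝓝 0)

/-- A tempered sequence: `|⋃_{k<n} F_k⁻¹ F_n| ≤ C |F_n|` for all `n`. -/
def IsTemperedSeq (F : ℕ → Finset G) : Prop :=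
  ∃ C : ℝ, 0 < C ∧ ∀ n : ℕ,
    ((⋃ k ∈ Finset.range n, ((F k : Set G)⁻¹ * (F n : Set G))).ncard : ℝ) ≤ C * (F n).card

/-- The growth condition `lim_n |F_n| / log n = ∞`. -/
def GrowthCond (F : ℕ → Finset G) : Prop :=
  Tendsto (fun n : ℕ => ((F n).card : ℝ) / Real.log n) atTop atTop

/-- `M(Z,N,ε,s,{F_n})`: infimum of `∑ exp(-s |F_{n_i}|)` over countable families of Bowen
balls `B_{F_{n_i}}(x_i,ε)`, `n_i ≥ N`, covering `Z`. -/
noncomputable def ballM (F : ℕ → Finset G) (Z : Set X) (N : ℕ) (ε s : ℝ) : ℝ≥0∞ :=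
  ⨅ (I : Set (X × ℕ)) (_ : I.Countable) (_ : ∀ p ∈ I, N ≤ p.2)
    (_ : Z ⊆ ⋃ p ∈ I, bowenBall (F p.2) p.1 ε),
    ∑' p : I, ENNReal.ofReal (Real.exp (-s * ((F (p : X × ℕ).2).card : ℝ)))

/-- `M(Z,ε,s,{F_n}) = lim_{N→∞} M(Z,N,ε,s,{F_n})` (the quantity is nondecreasing in `N`). -/
noncomputable def ballMN (F : ℕ → Finset G) (Z : Set X) (ε s : ℝ) : ℝ≥0∞ :=
  ⨆ N : ℕ, ballM F Z N ε s

/-- `M(Z,s,{F_n}) = lim_{ε→0} M(Z,ε,s,{F_n})` (the quantity is nondecreasing as `ε` decreases). -/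
noncomputable def ballMtot (F : ℕ → Finset G) (Z : Set X) (s : ℝ) : ℝ≥0∞ :=
  ⨆ (ε : ℝ) (_ : 0 < ε), ballMN F Z ε s

/-- The Bowen topological entropy of `Z` along `{F_n}`: the critical value of `s` at which
`M(Z,s,{F_n})` jumps from `+∞` to `0`, i.e. `inf {s : M(Z,s,{F_n}) = 0}`. -/
noncomputable def bowenEnt (F : ℕ → Finset G) (Z : Set X) : ℝ≥0∞ :=
  ⨅ (s : ℝ) (_ : ballMtot F Z s = 0), ENNReal.ofReal s

/-- The weighted quantity `W(f,N,ε,s,{F_n})`. -/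
noncomputable def wtW (F : ℕ → Finset G) (f : X → ℝ≥0∞) (N : ℕ) (ε s : ℝ) : ℝ≥0∞ :=
  ⨅ (I : Set (X × ℕ)) (c : X × ℕ → ℝ≥0∞) (_ : I.Countable)
    (_ : ∀ p ∈ I, N ≤ p.2 ∧ 0 < c p ∧ c p < ⊤)
    (_ : ∀ x : X, f x ≤ ∑' p : I, c (p : X × ℕ) *
        (bowenBall (F (p : X × ℕ).2) (p : X × ℕ).1 ε).indicator (fun _ => (1 : ℝ≥0∞)) x),
    ∑' p : I, c (p : X × ℕ) * ENNReal.ofReal (Real.exp (-s * ((F (p : X × ℕ).2).card : ℝ)))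

/-- `W(Z,N,ε,s,{F_n}) = W(χ_Z,N,ε,s,{F_n})`. -/
noncomputable def wtWset (F : ℕ → Finset G) (Z : Set X) (N : ℕ) (ε s : ℝ) : ℝ≥0∞ :=
  wtW F (Z.indicator fun _ => (1 : ℝ≥0∞)) N ε s

/-- `W(Z,ε,s,{F_n}) = lim_{N→∞} W(Z,N,ε,s,{F_n})`. -/
noncomputable def wtWN (F : ℕ → Finset G) (Z : Set X) (ε s : ℝ) : ℝ≥0∞ :=
  ⨆ N : ℕ, wtWset F Z N ε s

/-- `W(Z,s,{F_n}) = lim_{ε→0} W(Z,ε,s,{F_n})`. -/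
noncomputable def wtWtot (F : ℕ → Finset G) (Z : Set X) (s : ℝ) : ℝ≥0∞ :=
  ⨆ (ε : ℝ) (_ : 0 < ε), wtWN F Z ε s

/-- The weighted Bowen topological entropy of `Z` along `{F_n}`. -/
noncomputable def wtBowenEnt (F : ℕ → Finset G) (Z : Set X) : ℝ≥0∞ :=
  ⨅ (s : ℝ) (_ : wtWtot F Z s = 0), ENNReal.ofReal s

/-- A finite open cover of `X`. -/
def IsFinOpenCover (𝒰 : Finset (Set X)) : Prop :=
  (∀ U ∈ 𝒰, IsOpen U) ∧ ⋃₀ (𝒰 : Set (Set X)) = Set.univ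

/-- `N(⋁_{g∈F} g⁻¹𝒰)`: the minimal cardinality of a subcover of the refined cover, whose members
are the sets `X(𝐔) = ⋂_{g∈F} g⁻¹ U_g` with `U_g ∈ 𝒰`. -/
noncomputable def coverNum (𝒰 : Finset (Set X)) (F : Finset G) : ℕ :=
  sInf {k : ℕ | ∃ Λ : Finset (G → Set X), Λ.card = k ∧
    (∀ u ∈ Λ, ∀ g ∈ F, u g ∈ 𝒰) ∧
    (⋃ u ∈ Λ, ⋂ g ∈ F, (fun y => g • y) ⁻¹' u g) = Set.univ}

/-- `h_top(G,𝒰) = lim_n (1/|F_n|) log N(⋁_{g∈F_n} g⁻¹𝒰)` (the limit exists by Ornstein–Weiss,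
hence equals the `limsup`). -/
noncomputable def coverTopEnt (F : ℕ → Finset G) (𝒰 : Finset (Set X)) : ℝ :=
  limsup (fun n => Real.log (coverNum 𝒰 (F n)) / (F n).card) atTop

/-- The topological entropy `h_top(X,G)`, the supremum over finite open covers. -/
noncomputable def topEnt (X : Type*) [MetricSpace X] [MulAction G X] (F : ℕ → Finset G) : ℝ≥0∞ :=
  ⨆ (𝒰 : Finset (Set X)) (_ : IsFinOpenCover 𝒰), ENNReal.ofReal (coverTopEnt F 𝒰)

/-- `M(Z,𝒰,N,s,{F_n})`: infimum of `∑_{𝐔∈Λ} exp(-s m(𝐔))` over collections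
`Λ ⊆ ⋃_{j≥N} 𝒲_{F_j}(𝒰)` covering `Z`; an element `𝐔 ∈ 𝒲_{F_j}(𝒰)` is encoded as a pair
`(j, u)` with `u g ∈ 𝒰` for `g ∈ F_j` (and `u g = ∅` elsewhere), `X(𝐔) = ⋂_{g∈F_j} g⁻¹ (u g)`
and `m(𝐔) = |F_j|`. -/
noncomputable def covM (F : ℕ → Finset G) (𝒰 : Finset (Set X)) (Z : Set X) (N : ℕ) (s : ℝ) :
    ℝ≥0∞ :=
  ⨅ (Λ : Set (ℕ × (G → Set X)))
    (_ : ∀ p ∈ Λ, N ≤ p.1 ∧ (∀ g ∈ F p.1, p.2 g ∈ 𝒰) ∧ (∀ g ∉ F p.1, p.2 g = ∅))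
    (_ : Z ⊆ ⋃ p ∈ Λ, ⋂ g ∈ F p.1, (fun y => g • y) ⁻¹' p.2 g),
    ∑' p : Λ, ENNReal.ofReal (Real.exp (-s * ((F (p : ℕ × (G → Set X)).1).card : ℝ)))

/-- `M(Z,𝒰,s,{F_n}) = lim_{N→∞} M(Z,𝒰,N,s,{F_n})`. -/
noncomputable def covMtot (F : ℕ → Finset G) (𝒰 : Finset (Set X)) (Z : Set X) (s : ℝ) : ℝ≥0∞ :=
  ⨆ N : ℕ, covM F 𝒰 Z N s

/-- The cover-based Bowen topological entropy `h^B_top(𝒰,Z,{F_n}) = inf {s : M(Z,𝒰,s,{F_n}) = 0}`. -/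
noncomputable def covBowenEnt (F : ℕ → Finset G) (𝒰 : Finset (Set X)) (Z : Set X) : ℝ≥0∞ :=
  ⨅ (s : ℝ) (_ : covMtot F 𝒰 Z s = 0), ENNReal.ofReal s

/-- `diam(𝒰) = max {diam U : U ∈ 𝒰}`. -/
noncomputable def coverDiam (𝒰 : Finset (Set X)) : ℝ≥0∞ :=
  ⨆ U ∈ 𝒰, EMetric.diam U

end Defs

section MeasureDefs

variable [Group G] [MetricSpace X] [MulAction G X] [MeasurableSpace X]

/-- The quantity `-(1/m) log μ(B)`, with value `+∞` when `μ B = 0`. -/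
noncomputable def locTerm (μ : Measure X) (B : Set X) (m : ℕ) : ℝ≥0∞ :=
  if μ B = 0 then ⊤ else ENNReal.ofReal (-(Real.log ((μ B).toReal)) / (m : ℝ))

/-- The lower local entropy `h̲_μ^{loc}(x,ε,{F_n}) = liminf_n -(1/|F_n|) log μ(B_{F_n}(x,ε))`. -/
noncomputable def lowLoc (μ : Measure X) (F : ℕ → Finset G) (x : X) (ε : ℝ) : ℝ≥0∞ :=
  liminf (fun n => locTerm μ (bowenBall (F n) x ε) (F n).card) atTop

/-- The upper local entropy `limsup_n -(1/|F_n|) log μ(B_{F_n}(x,ε))`. -/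
noncomputable def upLoc (μ : Measure X) (F : ℕ → Finset G) (x : X) (ε : ℝ) : ℝ≥0∞ :=
  limsup (fun n => locTerm μ (bowenBall (F n) x ε) (F n).card) atTop

/-- `h̲_μ^{loc}(x,{F_n}) = lim_{ε→0} h̲_μ^{loc}(x,ε,{F_n})` (a monotone limit, i.e. the
supremum over `ε > 0`). -/
noncomputable def lowLocPt (μ : Measure X) (F : ℕ → Finset G) (x : X) : ℝ≥0∞ :=
  ⨆ (ε : ℝ) (_ : 0 < ε), lowLoc μ F x ε

/-- `h̲_μ^{loc}({F_n}) = ∫_X h̲_μ^{loc}(x,{F_n}) dμ(x)`. -/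
noncomputable def lowLocEnt (μ : Measure X) (F : ℕ → Finset G) : ℝ≥0∞ :=
  ∫⁻ x, lowLocPt μ F x ∂μ

/-- A finite measurable partition of `X`, presented as `P : Fin k → Set X`. -/
def IsMeasPartition {k : ℕ} (P : Fin k → Set X) : Prop :=
  (∀ i, MeasurableSet (P i)) ∧ Pairwise (Function.onFun Disjoint P) ∧ (⋃ i, P i) = Set.univ

/-- The static entropy `H_μ(𝒫_F)` of the join `𝒫_F = ⋁_{g∈F} g⁻¹𝒫`; its atoms are the
nonempty sets `⋂_{g∈F} g⁻¹ P(u g)` (distinct choices `u` yield disjoint atoms, and empty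
atoms contribute `0`). -/
noncomputable def partH (μ : Measure X) {k : ℕ} (P : Fin k → Set X) (F : Finset G) : ℝ :=
  letI := Classical.decEq G
  ∑ u : (↥F → Fin k),
    Real.negMulLog ((μ (⋂ g : ↥F, (fun y => (g : G) • y) ⁻¹' P (u g))).toReal)

/-- `h_μ(G,𝒫) = liminf_n (1/|F_n|) H_μ(𝒫_{F_n})`. -/
noncomputable def partEnt (μ : Measure X) (F : ℕ → Finset G) {k : ℕ} (P : Fin k → Set X) : ℝ :=
  liminf (fun n => partH μ P (F n) / (F n).card) atTop

/-- The measure-theoretic entropy `h_μ(X,G) = sup_𝒫 h_μ(G,𝒫)` (it is independent of the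
Følner sequence used to compute it). -/
noncomputable def measEnt (μ : Measure X) (F : ℕ → Finset G) : ℝ≥0∞ :=
  ⨆ (k : ℕ) (P : Fin k → Set X) (_ : IsMeasPartition P), ENNReal.ofReal (partEnt μ F P)

/-- Ergodicity of the `G`-action w.r.t. `μ`. -/
def IsErgodicGAction (G : Type*) [Group G] [MulAction G X] (μ : Measure X) : Prop :=
  ∀ A : Set X, MeasurableSet A → (∀ g : G, (g • ·) ⁻¹' A = A) → μ A = 0 ∨ μ A = 1

end MeasureDefs

/-! The functional `p f = W(χ_K f⁺, N, ε, s) / W(K, N, ε, s)` on `C(X, ℝ)` is sublinear, finite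
(`X` is covered by finitely many Bowen balls) and `p 1 = 1`. Hahn–Banach gives a linear `L ≤ p`
with `L 1 = 1`; it is positive because `p (-f) = 0` for `f ≥ 0`, so Riesz–Markov–Kakutani
represents it by a probability measure `μ`. If `f` vanishes on `K` then `L f ≤ p f = 0`, whence
`μ Kᶜ = 0`. If `0 ≤ f ≤ 1` is supported in `B_{F_n}(x, ε)`, the single ball `B_{F_n}(x, ε)` with
weight `1` covers `χ_K f⁺`, so `L f ≤ exp(-s|F_n|) / W(K, N, ε, s)`; inner regularity transfers
this bound to `μ` of the open Bowen ball. -/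

theorem tsum_union_indicator_add_mul {α : Type*} (I₁ I₂ : Set α) (c₁ c₂ k : α → ℝ≥0∞) :
    ∑' p : ↥(I₁ ∪ I₂), (I₁.indicator c₁ p + I₂.indicator c₂ p) * k p
      = ∑' p : I₁, c₁ p * k p + ∑' p : I₂, c₂ p * k p := by
  rw [tsum_subtype (I₁ ∪ I₂) fun p => (I₁.indicator c₁ p + I₂.indicator c₂ p) * k p,
    tsum_subtype I₁ fun p => c₁ p * k p, tsum_subtype I₂ fun p => c₂ p * k p,
    ← ENNReal.tsum_add]
  congr 1
  funext p
  by_cases h₁ : p ∈ I₁ <;> by_cases h₂ : p ∈ I₂ <;> simp [h₁, h₂, add_mul]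

section Weighted

variable [Group G] [MetricSpace X] [MulAction G X] {F : ℕ → Finset G} {N : ℕ} {ε s : ℝ}
  {f g : X → ℝ≥0∞}

theorem isOpen_bowenBall [ContinuousConstSMul G X] (E : Finset G) (x : X) (r : ℝ) :
    IsOpen (bowenBall E x r) := by
  have : bowenBall E x r = ⋂ g ∈ E, (g • ·) ⁻¹' Metric.ball (g • x) r := by
    ext y
    simp [bowenBall, dist_comm]
  rw [this]
  exact isOpen_biInter_finset fun g _ => Metric.isOpen_ball.preimage (continuous_const_smul g)

theorem mem_bowenBall_self (E : Finset G) (x : X) {r : ℝ} (hr : 0 < r) :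
    x ∈ bowenBall E x r := fun g _ => by simpa using hr

theorem wtW_le_tsum (I : Set (X × ℕ)) (c : X × ℕ → ℝ≥0∞) (hI : I.Countable)
    (hc : ∀ p ∈ I, N ≤ p.2 ∧ 0 < c p ∧ c p < ⊤)
    (hf : ∀ x, f x ≤ ∑' p : I, c p *
      (bowenBall (F (p : X × ℕ).2) (p : X × ℕ).1 ε).indicator (fun _ => 1) x) :
    wtW F f N ε s ≤ ∑' p : I, c p * ENNReal.ofReal (Real.exp (-s * (F (p : X × ℕ).2).card)) :=
  iInf₂_le_of_le I c <| iInf₂_le_of_le hI hc <| iInf_le _ hf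

theorem exists_tsum_lt_of_wtW_lt {b : ℝ≥0∞} (h : wtW F f N ε s < b) :
    ∃ (I : Set (X × ℕ)) (c : X × ℕ → ℝ≥0∞), I.Countable ∧
      (∀ p ∈ I, N ≤ p.2 ∧ 0 < c p ∧ c p < ⊤) ∧
      (∀ x, f x ≤ ∑' p : I, c p *
        (bowenBall (F (p : X × ℕ).2) (p : X × ℕ).1 ε).indicator (fun _ => 1) x) ∧
      ∑' p : I, c p * ENNReal.ofReal (Real.exp (-s * (F (p : X × ℕ).2).card)) < b := by
  simpa only [wtW, iInf_lt_iff, exists_prop] using h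

theorem wtW_mono (h : f ≤ g) : wtW F f N ε s ≤ wtW F g N ε s :=
  le_iInf₂ fun I c => le_iInf₂ fun hI hc => le_iInf fun hg =>
    wtW_le_tsum I c hI hc fun x => (h x).trans (hg x)

theorem wtW_zero : wtW F (fun _ : X => 0) N ε s = 0 :=
  nonpos_iff_eq_zero.1 <| (wtW_le_tsum ∅ 0 countable_empty (by simp) (by simp)).trans_eq
    (by simp)

theorem wtW_add_le : wtW F (f + g) N ε s ≤ wtW F f N ε s + wtW F g N ε s := by
  refine ENNReal.le_of_forall_pos_le_add fun δ hδ hlt => ?_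
  have hδ2 : (δ / 2 : ℝ≥0∞) ≠ 0 := by simpa using hδ.ne'
  obtain ⟨I₁, c₁, hI₁, hc₁, hf₁, hsum₁⟩ := exists_tsum_lt_of_wtW_lt
    (ENNReal.lt_add_right (ne_top_of_le_ne_top hlt.ne le_self_add) hδ2)
  obtain ⟨I₂, c₂, hI₂, hc₂, hf₂, hsum₂⟩ := exists_tsum_lt_of_wtW_lt
    (ENNReal.lt_add_right (ne_top_of_le_ne_top hlt.ne le_add_self) hδ2)
  have hfin {I : Set (X × ℕ)} {c : X × ℕ → ℝ≥0∞} (hc : ∀ p ∈ I, N ≤ p.2 ∧ 0 < c p ∧ c p < ⊤)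
      (p : X × ℕ) : I.indicator c p < ⊤ := by
    by_cases hp : p ∈ I <;> simp [hp, (hc _ _).2.2]
  have hc : ∀ p ∈ I₁ ∪ I₂, N ≤ p.2 ∧ 0 < I₁.indicator c₁ p + I₂.indicator c₂ p ∧
      I₁.indicator c₁ p + I₂.indicator c₂ p < ⊤ := by
    rintro p (hp | hp)
    · exact ⟨(hc₁ p hp).1, (hc₁ p hp).2.1.trans_le (by simp [hp]),
        ENNReal.add_lt_top.2 ⟨hfin hc₁ p, hfin hc₂ p⟩⟩
    · exact ⟨(hc₂ p hp).1, (hc₂ p hp).2.1.trans_le (by simp [hp]),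
        ENNReal.add_lt_top.2 ⟨hfin hc₁ p, hfin hc₂ p⟩⟩
  calc wtW F (f + g) N ε s
      ≤ ∑' p : ↥(I₁ ∪ I₂), (I₁.indicator c₁ p + I₂.indicator c₂ p) *
          ENNReal.ofReal (Real.exp (-s * (F (p : X × ℕ).2).card)) := by
        refine wtW_le_tsum _ _ (hI₁.union hI₂) hc fun x => ?_
        rw [tsum_union_indicator_add_mul I₁ I₂ c₁ c₂ fun p =>
          (bowenBall (F p.2) p.1 ε).indicator (fun _ => 1) x]
        exact add_le_add (hf₁ x) (hf₂ x)
    _ ≤ (wtW F f N ε s + δ / 2) + (wtW F g N ε s + δ / 2) := by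
        rw [tsum_union_indicator_add_mul I₁ I₂ c₁ c₂ fun p =>
          ENNReal.ofReal (Real.exp (-s * (F p.2).card))]
        exact add_le_add hsum₁.le hsum₂.le
    _ = wtW F f N ε s + wtW F g N ε s + δ := by
        rw [add_add_add_comm, ENNReal.add_halves]

theorem wtW_const_mul_le {a : ℝ≥0∞} (ha : a ≠ ⊤) :
    wtW F (fun x => a * f x) N ε s ≤ a * wtW F f N ε s := by
  rcases eq_or_ne a 0 with rfl | ha₀
  · simpa using (wtW_zero (F := F) (N := N) (ε := ε) (s := s)).le
  rw [mul_comm, ← ENNReal.div_le_iff ha₀ ha]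
  refine le_iInf₂ fun I c => le_iInf₂ fun hI hc => le_iInf fun hf => ?_
  rw [ENNReal.div_le_iff ha₀ ha, mul_comm, ← ENNReal.tsum_mul_left]
  simp_rw [← mul_assoc]
  refine wtW_le_tsum I _ hI (fun p hp => ⟨(hc p hp).1, ENNReal.mul_pos ha₀ (hc p hp).2.1.ne',
    ENNReal.mul_lt_top ha.lt_top (hc p hp).2.2⟩) fun x => ?_
  simp_rw [mul_assoc, ENNReal.tsum_mul_left]
  exact mul_le_mul_right (hf x) a

theorem wtW_const_mul {a : ℝ≥0∞} (ha₀ : a ≠ 0) (ha : a ≠ ⊤) :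
    wtW F (fun x => a * f x) N ε s = a * wtW F f N ε s := by
  refine le_antisymm (wtW_const_mul_le ha) ?_
  calc a * wtW F f N ε s
      = a * wtW F (fun x => a⁻¹ * (a * f x)) N ε s := by
        simp_rw [← mul_assoc, ENNReal.inv_mul_cancel ha₀ ha, one_mul]
    _ ≤ a * (a⁻¹ * wtW F (fun x => a * f x) N ε s) :=
        mul_le_mul_right (wtW_const_mul_le (ENNReal.inv_ne_top.2 ha₀)) a
    _ = wtW F (fun x => a * f x) N ε s := by
        rw [← mul_assoc, ENNReal.mul_inv_cancel ha₀ ha, one_mul]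

theorem wtW_le_of_le_indicator_bowenBall {x : X} {n : ℕ} (hn : N ≤ n)
    (hf : ∀ y, f y ≤ (bowenBall (F n) x ε).indicator (fun _ => 1) y) :
    wtW F f N ε s ≤ ENNReal.ofReal (Real.exp (-s * (F n).card)) := by
  simpa using wtW_le_tsum {(x, n)} 1 (countable_singleton _) (by simp [hn]) (by simpa using hf)

theorem wtWset_ne_top [CompactSpace X] [ContinuousConstSMul G X] (hε : 0 < ε) (K : Set X) :
    wtWset F K N ε s ≠ ⊤ := by
  classical
  obtain ⟨t, ht⟩ := isCompact_univ.elim_finite_subcover (fun x : X => bowenBall (F N) x ε)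
    (fun x => isOpen_bowenBall _ _ _) fun y _ => mem_iUnion.2 ⟨y, mem_bowenBall_self _ _ hε⟩
  let I : Finset (X × ℕ) := t.image fun x => (x, N)
  refine ne_top_of_le_ne_top ?_ (wtW_le_tsum (I : Set (X × ℕ)) 1 I.countable_toSet
    (by simp [I]) fun y => ?_)
  · simp only [Pi.one_apply, one_mul]
    rw [Finset.tsum_subtype' I fun p => ENNReal.ofReal (Real.exp (-s * (F p.2).card))]
    exact ENNReal.sum_ne_top.2 fun _ _ => ENNReal.ofReal_ne_top
  · obtain ⟨x, hxt, hyx⟩ := mem_iUnion₂.1 (ht (mem_univ y))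
    have hxI : (x, N) ∈ I := Finset.mem_image_of_mem (fun x => (x, N)) hxt
    refine le_trans ?_ (ENNReal.le_tsum (⟨(x, N), hxI⟩ : I))
    simp only [Pi.one_apply, one_mul, indicator_of_mem hyx]
    exact indicator_le (fun _ _ => le_rfl) y

end Weighted

open scoped CompactlySupported

theorem exists_linearMap_eq_one_le_toReal_div {E : Type*} [AddCommGroup E] [Module ℝ E]
    (Φ : E → ℝ≥0∞) (hΦ : ∀ x, Φ x ≠ ⊤) (hadd : ∀ x y, Φ (x + y) ≤ Φ x + Φ y)
    (hsmul : ∀ r : ℝ, 0 < r → ∀ x, Φ (r • x) = ENNReal.ofReal r * Φ x) {e : E} (he : Φ e ≠ 0) :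
    ∃ L : E →ₗ[ℝ] ℝ, L e = 1 ∧ ∀ x, L x ≤ (Φ x).toReal / (Φ e).toReal := by
  let p : E → ℝ := fun x => (Φ x).toReal / (Φ e).toReal
  have hp_smul (r : ℝ) (hr : 0 < r) (x : E) : p (r • x) = r * p x := by
    simp only [p, hsmul r hr, ENNReal.toReal_mul, ENNReal.toReal_ofReal hr.le, mul_div_assoc]
  have hp_add (x y : E) : p (x + y) ≤ p x + p y := by
    rw [← add_div, ← ENNReal.toReal_add (hΦ x) (hΦ y)]
    exact div_le_div_of_nonneg_right
      (ENNReal.toReal_mono (ENNReal.add_ne_top.2 ⟨hΦ x, hΦ y⟩) (hadd x y)) ENNReal.toReal_nonneg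
  have hpe : p e = 1 := div_self (ENNReal.toReal_ne_zero.2 ⟨he, hΦ e⟩)
  have he₀ : e ≠ 0 := by
    rintro rfl
    have := hp_smul 2 two_pos 0
    rw [smul_zero] at this
    linarith
  obtain ⟨L, hLe, hLp⟩ := exists_extension_of_le_sublinear
    (LinearPMap.mkSpanSingleton (K := ℝ) e (1 : ℝ) he₀) p hp_smul hp_add <| by
      rintro ⟨x, hx⟩
      obtain ⟨r, rfl⟩ := Submodule.mem_span_singleton.1 hx
      rw [LinearPMap.mkSpanSingleton'_apply, RingHom.id_apply, smul_eq_mul, mul_one]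
      rcases le_or_gt r 0 with hr | hr
      · exact hr.trans (by positivity)
      · rw [hp_smul r hr, hpe, mul_one]
  exact ⟨L, (hLe ⟨e, Submodule.mem_span_singleton_self e⟩).trans
    (LinearPMap.mkSpanSingleton_apply ℝ ℝ he₀ 1), hLp⟩

theorem RealRMK.rieszMeasure_le_of_forall_tsupport_subset {X : Type*} [TopologicalSpace X]
    [T2Space X] [LocallyCompactSpace X] [MeasurableSpace X] [BorelSpace X]
    (Λ : C_c(X, ℝ) →ₚ[ℝ] ℝ) {U : Set X} (hU : IsOpen U) {b : ℝ≥0∞}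
    (h : ∀ f : C_c(X, ℝ), (∀ x, 0 ≤ f x ∧ f x ≤ 1) → tsupport f ⊆ U → ENNReal.ofReal (Λ f) ≤ b) :
    rieszMeasure Λ U ≤ b := by
  rw [hU.measure_eq_iSup_isCompact]
  refine iSup₂_le fun K hKU => iSup_le fun hK => ?_
  obtain ⟨f, hfK, hfc, hfU, hf⟩ := exists_continuousMap_one_of_isCompact_subset_isOpen hK hU hKU
  exact (rieszMeasure_le_of_eq_one Λ (f := ⟨f, hfc⟩) (fun x => (hf x).1) hK hfK).trans
    (h _ hf hfU)

section PositivePart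

variable [Group G] [MetricSpace X] [MulAction G X] {F : ℕ → Finset G} {K : Set X} {N : ℕ}
  {ε s : ℝ}

variable (F K N ε s) in
noncomputable def wtWPosOn (f : X → ℝ) : ℝ≥0∞ :=
  wtW F (K.indicator fun x => ENNReal.ofReal (f x)) N ε s

theorem wtWPosOn_add_le (f g : X → ℝ) :
    wtWPosOn F K N ε s (f + g) ≤ wtWPosOn F K N ε s f + wtWPosOn F K N ε s g := by
  refine (wtW_mono fun x => ?_).trans wtW_add_le
  by_cases hx : x ∈ K
  · simpa [hx] using ENNReal.ofReal_add_le
  · simp [hx]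

theorem wtWPosOn_smul {r : ℝ} (hr : 0 < r) (f : X → ℝ) :
    wtWPosOn F K N ε s (r • f) = ENNReal.ofReal r * wtWPosOn F K N ε s f := by
  have : (K.indicator fun x => ENNReal.ofReal ((r • f) x)) =
      fun x => ENNReal.ofReal r * K.indicator (fun x => ENNReal.ofReal (f x)) x := by
    ext x
    by_cases hx : x ∈ K
    · simp [hx, ENNReal.ofReal_mul hr.le]
    · simp [hx]
  rw [wtWPosOn, this, wtW_const_mul (by simpa using hr) ENNReal.ofReal_ne_top, wtWPosOn]

theorem wtWPosOn_eq_zero {f : X → ℝ} (hf : ∀ x ∈ K, f x ≤ 0) : wtWPosOn F K N ε s f = 0 := by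
  have : (K.indicator fun x => ENNReal.ofReal (f x)) = fun _ => 0 := by
    ext x
    by_cases hx : x ∈ K
    · simp [hx, hf x hx]
    · simp [hx]
  rw [wtWPosOn, this, wtW_zero]

theorem wtWPosOn_one : wtWPosOn F K N ε s (fun _ => 1) = wtWset F K N ε s := by
  simp [wtWPosOn, wtWset]

theorem wtWPosOn_le_mul {f : X → ℝ} {M : ℝ} (hf : ∀ x ∈ K, f x ≤ M) :
    wtWPosOn F K N ε s f ≤ ENNReal.ofReal M * wtWset F K N ε s := by
  refine (wtW_mono fun x => ?_).trans (wtW_const_mul_le ENNReal.ofReal_ne_top)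
  by_cases hx : x ∈ K
  · simpa [hx] using ENNReal.ofReal_le_ofReal (hf x hx)
  · simp [hx]

theorem wtWPosOn_le_of_bowenBall {f : X → ℝ} {x : X} {n : ℕ} (hn : N ≤ n)
    (hf : ∀ y, f y ≤ 1) (hfB : ∀ y ∉ bowenBall (F n) x ε, f y ≤ 0) :
    wtWPosOn F K N ε s f ≤ ENNReal.ofReal (Real.exp (-s * (F n).card)) := by
  refine wtW_le_of_le_indicator_bowenBall (x := x) hn fun y => ?_
  by_cases hy : y ∈ bowenBall (F n) x ε
  · simpa [hy] using indicator_le (fun y _ => ENNReal.ofReal_le_one.2 (hf y)) y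
  · simp [hy, hfB y hy]

end PositivePart

theorem exists_positiveLinearMap_le_wtWPosOn_div [Group G] [MetricSpace X] [CompactSpace X]
    [MulAction G X] {F : ℕ → Finset G} {K : Set X} {N : ℕ} {ε s : ℝ} (hK : IsCompact K)
    (hc₀ : wtWset F K N ε s ≠ 0) (hc : wtWset F K N ε s ≠ ⊤) :
    ∃ Λ : C_c(X, ℝ) →ₚ[ℝ] ℝ, Λ ⟨1, .of_compactSpace 1⟩ = 1 ∧
      ∀ f, ENNReal.ofReal (Λ f) ≤ wtWPosOn F K N ε s f / wtWset F K N ε s := by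
  have hfin (f : C_c(X, ℝ)) : wtWPosOn F K N ε s f ≠ ⊤ := by
    obtain ⟨M, hM⟩ := hK.bddAbove_image f.continuous.continuousOn
    exact ne_top_of_le_ne_top (ENNReal.mul_ne_top ENNReal.ofReal_ne_top hc)
      (wtWPosOn_le_mul fun x hx => hM (mem_image_of_mem f hx))
  have hone : wtWPosOn F K N ε s (⟨1, .of_compactSpace 1⟩ : C_c(X, ℝ)) = wtWset F K N ε s :=
    wtWPosOn_one
  obtain ⟨L, hL1, hL⟩ := exists_linearMap_eq_one_le_toReal_div
    (fun f : C_c(X, ℝ) => wtWPosOn F K N ε s f) hfin (fun f g => wtWPosOn_add_le f g)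
    (fun r hr f => wtWPosOn_smul hr f) (e := ⟨1, .of_compactSpace 1⟩) (hone ▸ hc₀)
  rw [hone] at hL
  have hLdiv (f : C_c(X, ℝ)) :
      ENNReal.ofReal (L f) ≤ wtWPosOn F K N ε s f / wtWset F K N ε s := by
    refine (ENNReal.ofReal_le_ofReal (hL f)).trans_eq ?_
    rw [← ENNReal.toReal_div, ENNReal.ofReal_toReal (ENNReal.div_ne_top (hfin f) hc₀)]
  refine ⟨PositiveLinearMap.mk₀ L fun f hf => ?_, hL1, hLdiv⟩
  have hneg := hLdiv (-f)
  rw [wtWPosOn_eq_zero (f := ⇑(-f)) fun x _ => by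
      simpa using CompactlySupportedContinuousMap.le_def.1 hf x, ENNReal.zero_div,
    nonpos_iff_eq_zero, ENNReal.ofReal_eq_zero, map_neg] at hneg
  linarith

theorem frostman_lemma_general
    [Group G] [MetricSpace X] [CompactSpace X]
    [MulAction G X] [ContinuousConstSMul G X] [MeasurableSpace X] [BorelSpace X]
    (F : ℕ → Finset G) (K : Set X) (hKc : IsCompact K)
    (s : ℝ) (N : ℕ) (ε : ℝ) (hε : 0 < ε)
    (hc : 0 < wtWset F K N ε s) :
    ∃ μ : Measure X, IsProbabilityMeasure μ ∧ μ K = 1 ∧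
      ∀ x : X, ∀ n : ℕ, N ≤ n →
        μ (bowenBall (F n) x ε) ≤
          (wtWset F K N ε s)⁻¹ * ENNReal.ofReal (Real.exp (-s * ((F n).card : ℝ))) := by
  obtain ⟨Λ, hΛ1, hΛ⟩ :=
    exists_positiveLinearMap_le_wtWPosOn_div hKc hc.ne' (wtWset_ne_top hε K)
  let μ := RealRMK.rieszMeasure Λ
  have hμ : IsProbabilityMeasure μ := by
    refine ⟨le_antisymm ?_ ?_⟩
    · simpa [hΛ1] using RealRMK.rieszMeasure_le_of_eq_one Λ (f := ⟨1, .of_compactSpace 1⟩)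
        (fun _ => zero_le_one) isCompact_univ fun _ _ => rfl
    · simpa [hΛ1] using RealRMK.le_rieszMeasure_tsupport_subset Λ
        (f := ⟨1, .of_compactSpace 1⟩) (fun _ => ⟨zero_le_one, le_rfl⟩) (subset_univ _)
  have hμK : μ Kᶜ = 0 := nonpos_iff_eq_zero.1 <|
    RealRMK.rieszMeasure_le_of_forall_tsupport_subset Λ hKc.isClosed.isOpen_compl
      fun f _ hfK => (hΛ f).trans_eq <| by
        rw [wtWPosOn_eq_zero fun x hx => (image_eq_zero_of_notMem_tsupport fun h => hfK h hx).le,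
          ENNReal.zero_div]
  refine ⟨μ, hμ, (prob_compl_eq_zero_iff hKc.measurableSet).1 hμK, fun x n hn => ?_⟩
  refine RealRMK.rieszMeasure_le_of_forall_tsupport_subset Λ (isOpen_bowenBall _ _ _)
    fun f hf hfB => ?_
  rw [← ENNReal.div_eq_inv_mul]
  exact (hΛ f).trans <| ENNReal.div_le_div_right (wtWPosOn_le_of_bowenBall hn (fun y => (hf y).2)
    fun y hy => (image_eq_zero_of_notMem_tsupport fun h => hy (hfB h)).le) _

/-- dynamical Frostman lemma. Let `K ⊆ X` be non-empty compact, `s ≥ 0`,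
`N ∈ ℕ`, `ε > 0` and suppose `c := W(K,N,ε,s,{F_n}) > 0`. Then there is a Borel probability
measure `μ` on `X` with `μ(K) = 1` and
`μ(B_{F_n}(x,ε)) ≤ (1/c) exp(-s|F_n|)` for every `x ∈ X` and `n ≥ N`. -/
theorem frostman_lemma
    [Group G] [Countable G] [MetricSpace X] [CompactSpace X]
    [MulAction G X] [ContinuousConstSMul G X] [MeasurableSpace X] [BorelSpace X]
    (F : ℕ → Finset G) (K : Set X) (hK : K.Nonempty) (hKc : IsCompact K)
    (s : ℝ) (hs : 0 ≤ s) (N : ℕ) (ε : ℝ) (hε : 0 < ε)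
    (hc : 0 < wtWset F K N ε s) :
    ∃ μ : Measure X, IsProbabilityMeasure μ ∧ μ K = 1 ∧
      ∀ x : X, ∀ n : ℕ, N ≤ n →
        μ (bowenBall (F n) x ε) ≤
          (wtWset F K N ε s)⁻¹ * ENNReal.ofReal (Real.exp (-s * ((F n).card : ℝ))) :=
  frostman_lemma_general F K hKc s N ε hε hc
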